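/- arXiv:1401.7245 — 2 statements merged into one kernel-verified Lean document; each statement's English description precedes it below -/
import Mathlib

section
/- Let E be a commutative ring in which 2 is invertible, let h be a finite-rank free E-module, and let s : h → h be an E-linear involution such that h = ker(s − 1) ⊕ ker(s + 1) and ker(s + 1) is free of rank 1, with basis element α. Let S = Sym_E(h) be the symmetric algebra of h over E, with the induced action of s by E-algebra automorphisms, and let S^s ⊆ S be the subalgebra of s-invariant elements. Then S is a free S^s-module of rank 2, with basis {1, α}. -/
/-!
Write `h = P ⊕ E α` with `P = ker (s - 1)` and let `R = S^σ`. The universal property gives an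
algebra map `θ : S → R[X]` with `θ (ι y) = ι y` (a constant) for `y ∈ P` and `θ (ι α) = X`; it is
a section of evaluation at `ι α` and intertwines `σ` with `X ↦ -X`. Hence `ι α` is a
non-zero-divisor, and for an anti-invariant `a` the polynomial `θ a` is odd, so `θ a = X p` with
`p` even and `a = p(ι α) · ι α` with `p(ι α)` invariant. As `2` is invertible, every element is an
invariant plus an anti-invariant, and `{1, ι α}` is a basis of `S` over `R`.
-/

universe u v w

/-- `S`, together with the `E`-linear map `ι : h →ₗ[E] S`, is a symmetric algebra of the
`E`-module `h`: every `E`-linear map from `h` to a commutative `E`-algebra factors uniquely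
through an `E`-algebra homomorphism out of `S`. -/
structure IsSymmetricAlgebra' {E : Type u} [CommRing E] {h : Type v} [AddCommGroup h]
    [Module E h] {S : Type w} [CommRing S] [Algebra E S] (ι : h →ₗ[E] S) : Prop where
  existsUnique_lift : ∀ (A : Type (max u v w)) [CommRing A] [Algebra E A] (f : h →ₗ[E] A),
      ∃! g : S →ₐ[E] A, ∀ x : h, g (ι x) = f x

open Polynomial

theorem Polynomial.exists_eq_X_mul_of_comp_neg_X_eq_neg {R : Type*} [CommRing R]
    (h2 : IsLeftRegular (2 : R)) {q : R[X]} (hq : q.comp (-X) = -q) :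
    ∃ p : R[X], p.comp (-X) = p ∧ q = X * p := by
  have hq0 : q.coeff 0 = 0 := by
    have := congrArg (eval 0) hq
    rw [eval_comp, eval_neg, eval_X, neg_zero, eval_neg, ← coeff_zero_eq_eval_zero] at this
    exact h2 (by linear_combination this)
  obtain ⟨p, rfl⟩ := X_dvd_iff.mpr hq0
  refine ⟨p, isRegular_X.left ?_, rfl⟩
  have : -X * p.comp (-X) = -(X * p) := by rwa [mul_comp, X_comp] at hq
  linear_combination -this

theorem mem_nonZeroDivisors_of_leftInverse_aeval {R S : Type*} [CommRing R] [CommRing S]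
    [Algebra R S] {t : S} (θ : S →+* R[X]) (hθt : θ t = X) (hθ : ∀ a, aeval t (θ a) = a) :
    t ∈ nonZeroDivisors S := by
  refine mem_nonZeroDivisors_iff_right.mpr fun b hb => ?_
  have : θ b * X = 0 * X := by rw [← hθt, ← map_mul, hb, map_zero, zero_mul]
  rw [← hθ b, isRegular_X.right this, map_zero]

section Invariants

variable {E : Type u} [CommRing E] {S : Type w} [CommRing S] [Algebra E S] {σ : S →ₐ[E] S}

theorem exists_fixed_add_neg (h2 : IsUnit (2 : E)) (hσ : ∀ a, σ (σ a) = a) (a : S) :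
    ∃ u v, σ u = u ∧ σ v = -v ∧ a = u + v := by
  refine ⟨(↑h2.unit⁻¹ : E) • (a + σ a), (↑h2.unit⁻¹ : E) • (a - σ a), ?_, ?_, ?_⟩
  · rw [map_smul, map_add, hσ, add_comm]
  · rw [map_smul, map_sub, hσ, ← smul_neg, neg_sub]
  · rw [← smul_add, add_add_sub_cancel, ← two_smul E, smul_smul, h2.val_inv_mul, one_smul]

theorem exists_basis_one_of_neg (h2 : IsUnit (2 : E)) (hσ : ∀ a, σ (σ a) = a) {t : S}
    (ht : σ t = -t) (ht_mem : t ∈ nonZeroDivisors S)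
    (hneg : ∀ a, σ a = -a → ∃ r, σ r = r ∧ a = r * t) :
    ∃ B : Module.Basis (Fin 2) (σ.equalizer (AlgHom.id E S)) S, B 0 = 1 ∧ B 1 = t := by
  have hli : LinearIndependent (σ.equalizer (AlgHom.id E S)) ![1, t] := by
    refine LinearIndependent.pair_iff.mpr fun r₀ r₁ hr => ?_
    have hsum : (r₀ : S) + r₁ * t = 0 := by simpa [Algebra.smul_def] using hr
    have hdiff : (r₀ : S) - r₁ * t = 0 := by
      have := congrArg σ hsum
      rwa [map_add, map_mul, r₀.2, r₁.2, ht, map_zero, mul_neg, ← sub_eq_add_neg] at this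
    have h₀ : (r₀ : S) = 0 := by
      have : (2 : E) • (r₀ : S) = 0 := by rw [two_smul]; linear_combination hsum + hdiff
      rwa [h2.smul_eq_zero] at this
    have h₁ : (r₁ : S) = 0 :=
      (mul_right_mem_nonZeroDivisors_eq_zero_iff ht_mem).mp (by linear_combination hsum - h₀)
    exact ⟨Subtype.ext h₀, Subtype.ext h₁⟩
  have hsp : ⊤ ≤ Submodule.span (σ.equalizer (AlgHom.id E S)) (Set.range ![1, t]) := by
    rintro a -
    obtain ⟨u, v, hu, hv, rfl⟩ := exists_fixed_add_neg h2 hσ a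
    obtain ⟨r, hr, rfl⟩ := hneg v hv
    rw [Matrix.range_cons_cons_empty, Submodule.mem_span_pair]
    exact ⟨⟨u, hu⟩, ⟨r, hr⟩, by simp [Algebra.smul_def]⟩
  exact ⟨Module.Basis.mk hli hsp, by simp, by simp⟩

theorem map_aeval_eq_aeval_comp_neg_X {t : S} (ht : σ t = -t)
    (p : (σ.equalizer (AlgHom.id E S))[X]) : σ (aeval t p) = aeval t (p.comp (-X)) := by
  have hσR : σ.toRingHom.comp (algebraMap (σ.equalizer (AlgHom.id E S)) S) =
      algebraMap (σ.equalizer (AlgHom.id E S)) S := RingHom.ext fun r => r.2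
  rw [aeval_comp, map_neg, aeval_X, ← ht, aeval_def, aeval_def]
  exact (hom_eval₂ p _ σ.toRingHom t).trans (by rw [hσR]; rfl)

theorem exists_eq_mul_of_neg (h2 : IsUnit (2 : E)) {t : S} (ht : σ t = -t)
    (θ : S →+* (σ.equalizer (AlgHom.id E S))[X]) (hθσ : ∀ a, θ (σ a) = (θ a).comp (-X))
    (hθ : ∀ a, aeval t (θ a) = a) {a : S} (ha : σ a = -a) : ∃ r, σ r = r ∧ a = r * t := by
  have h2R : IsUnit (2 : σ.equalizer (AlgHom.id E S)) := by
    rw [← map_ofNat (algebraMap E _) 2]; exact h2.map _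
  obtain ⟨p, hp, hθa⟩ := exists_eq_X_mul_of_comp_neg_X_eq_neg h2R.isRegular.left
    (q := θ a) (by rw [← hθσ, ha, map_neg])
  refine ⟨aeval t p, by rw [map_aeval_eq_aeval_comp_neg_X ht, hp], ?_⟩
  rw [← hθ a, hθa, map_mul, aeval_X, mul_comm]

end Invariants

namespace IsSymmetricAlgebra'

variable {E : Type u} [CommRing E] {h : Type v} [AddCommGroup h] [Module E h]
  {S : Type w} [CommRing S] [Algebra E S] {ι : h →ₗ[E] S}

theorem exists_lift (hS : IsSymmetricAlgebra' ι) {A : Type w} [CommRing A] [Algebra E A]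
    (f : h →ₗ[E] A) : ∃ g : S →ₐ[E] A, ∀ x, g (ι x) = f x := by
  obtain ⟨g, hg, -⟩ := hS.existsUnique_lift (ULift.{max u v} A)
    ((ULift.algEquiv (R := E)).symm.toLinearMap ∘ₗ f)
  exact ⟨ULift.algEquiv.toAlgHom.comp g, fun x => congrArg ULift.down (hg x)⟩

theorem algHom_ext (hS : IsSymmetricAlgebra' ι) {A : Type w} [CommRing A] [Algebra E A]
    {k₁ k₂ : S →ₐ[E] A} (hk : ∀ x, k₁ (ι x) = k₂ (ι x)) : k₁ = k₂ := by
  let up : A →ₐ[E] ULift.{max u v} A := (ULift.algEquiv (R := E)).symm.toAlgHom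
  have hup : up.comp k₁ = up.comp k₂ :=
    (hS.existsUnique_lift _ ((up.comp k₁).toLinearMap ∘ₗ ι)).unique (fun _ => rfl)
      fun x => by simp [hk]
  ext a
  exact congrArg ULift.down (AlgHom.congr_fun hup a)

theorem algHom_ext_of_isCompl (hS : IsSymmetricAlgebra' ι) {P Q : Submodule E h}
    (hPQ : IsCompl P Q) (b : Module.Basis (Fin 1) E Q) {A : Type w} [CommRing A] [Algebra E A]
    {k₁ k₂ : S →ₐ[E] A} (hP : ∀ y ∈ P, k₁ (ι y) = k₂ (ι y))
    (hb : k₁ (ι (b 0)) = k₂ (ι (b 0))) : k₁ = k₂ := by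
  have hQ : k₁.toLinearMap ∘ₗ ι ∘ₗ Q.subtype = k₂.toLinearMap ∘ₗ ι ∘ₗ Q.subtype :=
    b.ext fun i => by rw [Subsingleton.elim i 0]; exact hb
  have : k₁.toLinearMap ∘ₗ ι = k₂.toLinearMap ∘ₗ ι :=
    LinearMap.ext_on_codisjoint hPQ.codisjoint hP fun y hy => LinearMap.congr_fun hQ ⟨y, hy⟩
  exact hS.algHom_ext fun x => LinearMap.congr_fun this x

theorem exists_algHom_polynomial (hS : IsSymmetricAlgebra' ι) {P Q : Submodule E h}
    (hPQ : IsCompl P Q) (b : Module.Basis (Fin 1) E Q) {σ : S →ₐ[E] S}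
    (hσP : ∀ y ∈ P, σ (ι y) = ι y) (hσb : σ (ι (b 0)) = -ι (b 0)) :
    ∃ θ : S →ₐ[E] (σ.equalizer (AlgHom.id E S))[X], θ (ι (b 0)) = X ∧
      (∀ a, θ (σ a) = (θ a).comp (-X)) ∧ ∀ a, aeval (ι (b 0)) (θ a) = a := by
  let ιP : P →ₗ[E] σ.equalizer (AlgHom.id E S) :=
    LinearMap.codRestrict (σ.equalizer (AlgHom.id E S)).toSubmodule (ι ∘ₗ P.subtype)
      fun y => hσP y y.2
  obtain ⟨θ, hθ⟩ := hS.exists_lift (A := (σ.equalizer (AlgHom.id E S))[X])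
    (LinearMap.ofIsCompl hPQ ((Algebra.linearMap _ _).restrictScalars E ∘ₗ ιP)
      ((b.coord 0).smulRight X))
  have hθP : ∀ y (hy : y ∈ P), θ (ι y) = C ⟨ι y, hσP y hy⟩ := fun y hy => by
    rw [hθ, LinearMap.ofIsCompl_apply_left hPQ ⟨y, hy⟩]; rfl
  have hθb : θ (ι (b 0)) = X := by
    rw [hθ, LinearMap.ofIsCompl_apply_right hPQ (b 0)]
    simp
  refine ⟨θ, hθb, fun a => ?_, fun a => ?_⟩
  · have : θ.comp σ = ((aeval (-X)).restrictScalars E).comp θ :=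
      hS.algHom_ext_of_isCompl hPQ b (fun y hy => by simp [hσP y hy, hθP y hy])
        (by simp [hσb, hθb])
    exact AlgHom.congr_fun this a
  · have : ((aeval (ι (b 0))).restrictScalars E).comp θ = AlgHom.id E S :=
      hS.algHom_ext_of_isCompl hPQ b (fun y hy => by simp [hθP y hy]) (by simp [hθb])
    exact AlgHom.congr_fun this a

end IsSymmetricAlgebra'

theorem symmetricAlgebra_free_rank_two_over_involution_invariants_general
    {E : Type u} [CommRing E] (h2 : IsUnit (2 : E))
    {h : Type v} [AddCommGroup h] [Module E h]
    (s : h →ₗ[E] h)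
    (hcompl : IsCompl (LinearMap.ker (s - LinearMap.id))
      (LinearMap.ker (s + LinearMap.id)))
    (α : h) (bα : Module.Basis (Fin 1) E (LinearMap.ker (s + LinearMap.id)))
    (hbα : ((bα 0 : LinearMap.ker (s + LinearMap.id)) : h) = α)
    {S : Type w} [CommRing S] [Algebra E S] (ι : h →ₗ[E] S)
    (hS : IsSymmetricAlgebra' ι)
    (σ : S →ₐ[E] S) (hσ : ∀ x : h, σ (ι x) = ι (s x)) :
    ∃ b : Module.Basis (Fin 2) (AlgHom.equalizer σ (AlgHom.id E S)) S,
      b 0 = 1 ∧ b 1 = ι α := by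
  subst hbα
  have hσP : ∀ y ∈ LinearMap.ker (s - LinearMap.id), σ (ι y) = ι y := fun y hy => by
    rw [hσ, sub_eq_zero.mp hy]; rfl
  have hσα : σ (ι (bα 0)) = -ι (bα 0) := by
    rw [hσ, ← map_neg, eq_neg_of_add_eq_zero_left (bα 0).2]; rfl
  have hσσ : σ.comp σ = AlgHom.id E S :=
    hS.algHom_ext_of_isCompl hcompl bα (fun y hy => by simp [hσP y hy]) (by simp [hσα])
  obtain ⟨θ, hθX, hθσ, hθ⟩ := hS.exists_algHom_polynomial hcompl bα hσP hσα
  exact exists_basis_one_of_neg h2 (AlgHom.congr_fun hσσ) hσα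
    (mem_nonZeroDivisors_of_leftInverse_aeval θ.toRingHom hθX hθ)
    fun a ha => exists_eq_mul_of_neg h2 hσα θ.toRingHom hθσ hθ ha

/-- Let `E` be a commutative ring in which `2` is invertible, `h` a finite-rank
free `E`-module and `s : h → h` an `E`-linear involution such that
`h = ker(s - 1) ⊕ ker(s + 1)` with `ker(s + 1)` free of rank one with basis element `α`.
Let `S = Sym_E(h)` (a commutative `E`-algebra `S` with a map `ι : h → S` satisfying the
universal property of the symmetric algebra), endowed with the induced action of `s` by the
algebra automorphism `σ` (characterized by `σ ∘ ι = ι ∘ s`), and let `S^s` be the subalgebra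
of `σ`-invariants.  Then `S` is a free `S^s`-module of rank `2` with basis `{1, α}`. -/
theorem symmetricAlgebra_free_rank_two_over_involution_invariants
    {E : Type u} [CommRing E] (h2 : IsUnit (2 : E))
    {h : Type v} [AddCommGroup h] [Module E h] [Module.Free E h] [Module.Finite E h]
    (s : h →ₗ[E] h) (hs : s ∘ₗ s = LinearMap.id)
    (hcompl : IsCompl (LinearMap.ker (s - LinearMap.id))
      (LinearMap.ker (s + LinearMap.id)))
    (α : h) (bα : Module.Basis (Fin 1) E (LinearMap.ker (s + LinearMap.id)))
    (hbα : ((bα 0 : LinearMap.ker (s + LinearMap.id)) : h) = α)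
    {S : Type w} [CommRing S] [Algebra E S] (ι : h →ₗ[E] S)
    (hS : IsSymmetricAlgebra' ι)
    (σ : S →ₐ[E] S) (hσ : ∀ x : h, σ (ι x) = ι (s x)) :
    ∃ b : Module.Basis (Fin 2) (AlgHom.equalizer σ (AlgHom.id E S)) S,
      b 0 = 1 ∧ b 1 = ι α :=
  symmetricAlgebra_free_rank_two_over_involution_invariants_general h2 s hcompl α bα hbα ι hS σ hσ
end

section
/- Let E be a commutative ring in which 2 is invertible, let h be a finite-rank free E-module, and let s : h → h be an E-linear involution such that h = ker(s − 1) ⊕ ker(s + 1) with ker(s + 1) free of rank 1. Let E → E' be any ring homomorphism, let h' = E' ⊗_E h with the induced involution s' = id ⊗ s, and let S = Sym_E(h), S' = Sym_{E'}(h'). Then the natural E'-algebra map E' ⊗_E (S^s) → (S')^{s'} (induced by base change of the symmetric algebra) is an isomorphism onto the subalgebra of s'-invariants. -/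
/-!
Base change commutes with symmetric algebras: `E' ⊗_E S` and `S'` are both symmetric algebras
of `E' ⊗_E h` over `E'`, so the natural map `Φ : E' ⊗_E S → S'` is an isomorphism, and it
intertwines `id ⊗ σ` with `σ'`. Since `2` is invertible, `½ (1 + σ)` is a retraction of `S`
onto `S^σ`; it survives base change, so `E' ⊗_E S^σ → E' ⊗_E S` is injective with image
the fixed points of `id ⊗ σ`.
-/

universe u v w u' w'

open TensorProduct

/-- `S`, together with the `E`-linear map `ι : h →ₗ[E] S`, is a symmetric algebra of the
`E`-module `h`: every `E`-linear map from `h` to a commutative `E`-algebra factors uniquely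
through an `E`-algebra homomorphism out of `S`. -/
structure IsSymmetricAlgebraUP {E : Type u} [CommRing E] {h : Type v} [AddCommGroup h]
    [Module E h] {S : Type w} [CommRing S] [Algebra E S] (ι : h →ₗ[E] S) : Prop where
  existsUnique_lift : ∀ (A : Type (max u v w)) [CommRing A] [Algebra E A] (f : h →ₗ[E] A),
      ∃! g : S →ₐ[E] A, ∀ x : h, g (ι x) = f x

theorem IsSymmetricAlgebraUP.isSymmetricAlgebra {E : Type u} [CommRing E] {h : Type v}
    [AddCommGroup h] [Module E h] {S : Type w} [CommRing S] [Algebra E S] {ι : h →ₗ[E] S}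
    (hS : IsSymmetricAlgebraUP ι) : IsSymmetricAlgebra ι := by
  obtain ⟨G, hG, -⟩ := hS.existsUnique_lift (ULift.{w} (SymmetricAlgebra E h))
    (ULift.algEquiv.symm.toLinearMap ∘ₗ SymmetricAlgebra.ι E h)
  obtain ⟨_, -, huniq⟩ := hS.existsUnique_lift (ULift.{max u v} S)
    (ULift.algEquiv.symm.toLinearMap ∘ₗ ι)
  let L := SymmetricAlgebra.lift ι
  let G' := ULift.algEquiv.toAlgHom.comp G
  have hG' : ∀ x, G' (ι x) = SymmetricAlgebra.ι E h x := fun x => congrArg ULift.down (hG x)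
  have hGL : G'.comp L = AlgHom.id E _ :=
    SymmetricAlgebra.algHom_ext (LinearMap.ext fun x => by simp [L, hG'])
  have hLG : L.comp G' = AlgHom.id E S := by
    have h₁ := huniq (ULift.algEquiv.symm.toAlgHom.comp (L.comp G')) fun x => by simp [L, hG']
    have h₂ := huniq (ULift.algEquiv.symm.toAlgHom.comp (AlgHom.id E S)) fun x => by simp
    exact AlgHom.ext fun y => congrArg ULift.down (congrArg (· y) (h₁.trans h₂.symm))
  exact (AlgEquiv.ofAlgHom L G' hLG hGL).bijective

namespace IsSymmetricAlgebra

variable {R M A R' A' : Type*} [CommRing R] [AddCommGroup M] [Module R M] [CommRing A]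
  [Algebra R A] [CommRing R'] [Algebra R R'] [CommRing A'] [Algebra R' A'] [Algebra R A']
  [IsScalarTower R R' A'] {f : M →ₗ[R] A} {f' : R' ⊗[R] M →ₗ[R'] A'}

theorem bijective_productLeftAlgHom (hf : IsSymmetricAlgebra f) (hf' : IsSymmetricAlgebra f')
    {g : A →ₐ[R] A'} (hg : ∀ x, g (f x) = f' (1 ⊗ₜ x)) :
    Function.Bijective (Algebra.TensorProduct.productLeftAlgHom (Algebra.ofId R' A') g) := by
  set Φ := Algebra.TensorProduct.productLeftAlgHom (Algebra.ofId R' A') g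
  let Ψ : A' →ₐ[R'] R' ⊗[R] A := hf'.lift (f.baseChange R')
  have hΨΦ : Ψ.comp Φ = AlgHom.id R' _ := by
    refine Algebra.TensorProduct.ext (Subsingleton.elim _ _) (hf.algHom_ext ?_)
    ext x
    simp [Φ, Ψ, hg]
  have hΦΨ : Φ.comp Ψ = AlgHom.id R' A' := by
    refine hf'.algHom_ext (LinearMap.restrictScalars_injective R (TensorProduct.ext' ?_))
    intro a x
    have : f' (a ⊗ₜ x) = a • f' (1 ⊗ₜ x) := by rw [← map_smul, smul_tmul', smul_eq_mul, mul_one]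
    simp [Φ, Ψ, hg, this, Algebra.smul_def]
  exact (AlgEquiv.ofAlgHom Φ Ψ hΦΨ hΨΦ).bijective

end IsSymmetricAlgebra

namespace LinearMap

variable {R M N : Type*} [CommRing R] [Invertible (2 : R)] [AddCommGroup M] [Module R M]
  [AddCommGroup N] [Module R N] {σ : M →ₗ[R] M} {P : Submodule R M}

theorem exists_retraction_of_involution (hσ : σ ∘ₗ σ = id) (hP : ∀ x, x ∈ P ↔ σ x = x) :
    ∃ p : M →ₗ[R] P, p ∘ₗ P.subtype = id ∧ P.subtype ∘ₗ p = (⅟2 : R) • (id + σ) := by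
  set avg : M →ₗ[R] M := (⅟2 : R) • (id + σ)
  have hmem : ∀ x, avg x ∈ P := fun x => by
    have hx : σ (σ x) = x := congr($hσ x)
    simp [avg, hP, hx, add_comm]
  refine ⟨avg.codRestrict P hmem, ext fun x => Subtype.ext ?_, rfl⟩
  simp [avg, (hP x).1 x.2, invOf_two_smul_add_invOf_two_smul]

theorem lTensor_subtype_injective_of_involution (hσ : σ ∘ₗ σ = id)
    (hP : ∀ x, x ∈ P ↔ σ x = x) : Function.Injective (P.subtype.lTensor N) := by
  obtain ⟨p, hp, -⟩ := exists_retraction_of_involution hσ hP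
  refine Function.LeftInverse.injective (g := p.lTensor N) fun z => ?_
  rw [← comp_apply, ← lTensor_comp, hp, lTensor_id, id_apply]

theorem mem_range_lTensor_subtype_iff_of_involution (hσ : σ ∘ₗ σ = id)
    (hP : ∀ x, x ∈ P ↔ σ x = x) (t : N ⊗[R] M) :
    t ∈ range (P.subtype.lTensor N) ↔ σ.lTensor N t = t := by
  obtain ⟨p, -, hp⟩ := exists_retraction_of_involution hσ hP
  refine ⟨?_, fun ht => ⟨p.lTensor N t, ?_⟩⟩
  · rintro ⟨z, rfl⟩
    rw [← comp_apply, ← lTensor_comp, show σ ∘ₗ P.subtype = P.subtype from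
      ext fun x => (hP x).1 x.2]
  · rw [← comp_apply, ← lTensor_comp, hp]
    simp [lTensor_smul, lTensor_add, ht, invOf_two_smul_add_invOf_two_smul]

end LinearMap

namespace Algebra.TensorProduct

variable {R R' A B C : Type*} [CommRing R] [CommRing R'] [Algebra R R'] [CommRing A]
  [Algebra R A] [CommRing B] [Algebra R B] [CommRing C] [Algebra R' C] [Algebra R C]
  [IsScalarTower R R' C] (g : A →ₐ[R] C)

theorem productLeftAlgHom_ofId_lTensor_apply (φ : B →ₐ[R] A) (t : R' ⊗[R] B) :
    productLeftAlgHom (ofId R' C) g (φ.toLinearMap.lTensor R' t) =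
      productMap (IsScalarTower.toAlgHom R R' C) (g.comp φ) t := by
  induction t using TensorProduct.induction_on with
  | zero => simp
  | tmul a x => simp
  | add t₁ t₂ h₁ h₂ => simp [h₁, h₂]

theorem productLeftAlgHom_ofId_intertwines {σ : A →ₐ[R] A} {σ' : C →ₐ[R'] C}
    (hσ : ∀ x, σ' (g x) = g (σ x)) (t : R' ⊗[R] A) :
    σ' (productLeftAlgHom (ofId R' C) g t) =
      productLeftAlgHom (ofId R' C) g (σ.toLinearMap.lTensor R' t) := by
  induction t using TensorProduct.induction_on with
  | zero => simp
  | tmul a x => simp [hσ]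
  | add t₁ t₂ h₁ h₂ => simp [h₁, h₂]

end Algebra.TensorProduct

theorem baseChange_invariants_of_involution_general
    {E : Type u} [CommRing E] (h2 : IsUnit (2 : E))
    {h : Type v} [AddCommGroup h] [Module E h]
    (s : h →ₗ[E] h) (hs : s ∘ₗ s = LinearMap.id)
    {E' : Type u'} [CommRing E'] [Algebra E E']
    {S : Type w} [CommRing S] [Algebra E S] (ι : h →ₗ[E] S)
    (hS : IsSymmetricAlgebraUP ι)
    {S' : Type w'} [CommRing S'] [Algebra E' S'] [Algebra E S'] [IsScalarTower E E' S']
    (ι' : (E' ⊗[E] h) →ₗ[E'] S') (hS' : IsSymmetricAlgebraUP ι')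
    (σ : S →ₐ[E] S) (hσ : ∀ x : h, σ (ι x) = ι (s x))
    (σ' : S' →ₐ[E'] S')
    (hσ' : ∀ x : E' ⊗[E] h, σ' (ι' x) = ι' (LinearMap.baseChange E' s x))
    (g : S →ₐ[E] S') (hg : ∀ x : h, g (ι x) = ι' ((1 : E') ⊗ₜ[E] x)) :
    Function.Injective (Algebra.TensorProduct.productMap
        (IsScalarTower.toAlgHom E E' S')
        (g.comp (AlgHom.equalizer σ (AlgHom.id E S)).val))
    ∧ (Algebra.TensorProduct.productMap (IsScalarTower.toAlgHom E E' S')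
        (g.comp (AlgHom.equalizer σ (AlgHom.id E S)).val)).range
      = Subalgebra.restrictScalars E (AlgHom.equalizer σ' (AlgHom.id E' S')) := by
  let := h2.invertible
  have hSym := hS.isSymmetricAlgebra
  set Φ := Algebra.TensorProduct.productLeftAlgHom (Algebra.ofId E' S') g
  have hΦ : Function.Bijective Φ := hSym.bijective_productLeftAlgHom hS'.isSymmetricAlgebra hg
  have hσσ : σ.toLinearMap ∘ₗ σ.toLinearMap = LinearMap.id := by
    have hss : ∀ x, s (s x) = x := fun x => congr($hs x)
    have : σ.comp σ = AlgHom.id E S := hSym.algHom_ext (by ext; simp [hσ, hss])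
    exact congrArg AlgHom.toLinearMap this
  have hgσ : ∀ x, σ' (g x) = g (σ x) := by
    have : (σ'.restrictScalars E).comp g = g.comp σ := hSym.algHom_ext (by ext; simp [hσ, hσ', hg])
    exact fun x => DFunLike.congr_fun this x
  set P := Subalgebra.toSubmodule (AlgHom.equalizer σ (AlgHom.id E S))
  have hP : ∀ x, x ∈ P ↔ σ x = x := fun x => AlgHom.mem_equalizer σ (AlgHom.id E S) x
  have hfactor : ⇑(Algebra.TensorProduct.productMap (IsScalarTower.toAlgHom E E' S')
      (g.comp (AlgHom.equalizer σ (AlgHom.id E S)).val)) = Φ ∘ P.subtype.lTensor E' :=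
    funext fun t => (Algebra.TensorProduct.productLeftAlgHom_ofId_lTensor_apply g _ t).symm
  refine ⟨hfactor ▸ hΦ.1.comp (LinearMap.lTensor_subtype_injective_of_involution hσσ hP), ?_⟩
  ext y
  obtain ⟨t, rfl⟩ := hΦ.2 y
  rw [Subalgebra.mem_restrictScalars, AlgHom.mem_equalizer, AlgHom.id_apply,
    Algebra.TensorProduct.productLeftAlgHom_ofId_intertwines g hgσ, hΦ.1.eq_iff,
    ← LinearMap.mem_range_lTensor_subtype_iff_of_involution hσσ hP, AlgHom.mem_range, hfactor]
  exact exists_congr fun z => hΦ.1.eq_iff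

/-- Let `E` be a commutative ring in which `2` is invertible, `h` a finite-rank
free `E`-module, and `s` an `E`-linear involution of `h` with `h = ker(s-1) ⊕ ker(s+1)` and
`ker(s+1)` free of rank one.  Let `E → E'` be a ring homomorphism (i.e. `E'` an `E`-algebra),
`h' = E' ⊗[E] h` with the involution `s' = id ⊗ s`, and let `S = Sym_E(h)`, `S' = Sym_{E'}(h')`
(presented by their universal properties, with induced involutions `σ`, `σ'` and natural map
`g : S → S'` with `g(ι x) = ι'(1 ⊗ x)`).  Then the natural `E'`-algebra map
`E' ⊗_E (S^s) → S'` is injective with image the subalgebra `(S')^{s'}` of `s'`-invariants. -/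
theorem baseChange_invariants_of_involution
    {E : Type u} [CommRing E] (h2 : IsUnit (2 : E))
    {h : Type v} [AddCommGroup h] [Module E h] [Module.Free E h] [Module.Finite E h]
    (s : h →ₗ[E] h) (hs : s ∘ₗ s = LinearMap.id)
    (hcompl : IsCompl (LinearMap.ker (s - LinearMap.id))
      (LinearMap.ker (s + LinearMap.id)))
    (hrank1 : Nonempty (Module.Basis (Fin 1) E (LinearMap.ker (s + LinearMap.id))))
    {E' : Type u'} [CommRing E'] [Algebra E E']
    {S : Type w} [CommRing S] [Algebra E S] (ι : h →ₗ[E] S)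
    (hS : IsSymmetricAlgebraUP ι)
    {S' : Type w'} [CommRing S'] [Algebra E' S'] [Algebra E S'] [IsScalarTower E E' S']
    (ι' : (E' ⊗[E] h) →ₗ[E'] S') (hS' : IsSymmetricAlgebraUP ι')
    (σ : S →ₐ[E] S) (hσ : ∀ x : h, σ (ι x) = ι (s x))
    (σ' : S' →ₐ[E'] S')
    (hσ' : ∀ x : E' ⊗[E] h, σ' (ι' x) = ι' (LinearMap.baseChange E' s x))
    (g : S →ₐ[E] S') (hg : ∀ x : h, g (ι x) = ι' ((1 : E') ⊗ₜ[E] x)) :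
    Function.Injective (Algebra.TensorProduct.productMap
        (IsScalarTower.toAlgHom E E' S')
        (g.comp (AlgHom.equalizer σ (AlgHom.id E S)).val))
    ∧ (Algebra.TensorProduct.productMap (IsScalarTower.toAlgHom E E' S')
        (g.comp (AlgHom.equalizer σ (AlgHom.id E S)).val)).range
      = Subalgebra.restrictScalars E (AlgHom.equalizer σ' (AlgHom.id E' S')) :=
  baseChange_invariants_of_involution_general h2 s hs ι hS ι' hS' σ hσ σ' hσ' g hg
end
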